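/- Let τ = (1+√5)/2 and let ℤ_τ⁺ be the set of τ-integers. Then: (i) every nonzero x ∈ ℤ_τ⁺ has a unique representation x = Σ_{k=0}^n ε_k·τ^k with each ε_k ∈ {0,1}, ε_n = 1, and ε_k·ε_{k+1} = 0 for 0 ≤ k ≤ n−1; (ii) ℤ_τ⁺ ∖ {0} is the disjoint union of τ·ℤ_τ⁺ ∖ {0} and 1 + τ²·ℤ_τ⁺, and τ·ℤ_τ⁺ ∖ {0} is the disjoint union of τ + τ²·ℤ_τ⁺ and τ² + τ³·ℤ_τ⁺; (iii) for every nonzero a ∈ ℤ_τ⁺ with predecessor a₋ and successor a₊ in ℤ_τ⁺: if a ∈ 1 + τ²·ℤ_τ⁺ then a − a₋ = 1 and a₊ − a = 1/τ; if a ∈ τ + τ²·ℤ_τ⁺ then a − a₋ = 1/τ and a₊ − a = 1; and if a ∈ τ² + τ³·ℤ_τ⁺ then a − a₋ = 1 and a₊ − a = 1. -/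

import Mathlib

/-!
Every τ-integer is `τ y` or `1 + τ² y` with `y` a τ-integer (induct along the digits, using
`1 + τ (1 + τ² z) = τ (τ + τ² z)`), and nonzero τ-integers are at least `1`. Descending along
`x ↦ x / τ` then shows that the τ-integers above `x ∈ ℤ_τ⁺` are at least `x + 1/τ`, and at least
`x + 1` when `x ∈ τ ℤ_τ⁺`. This gap estimate determines successors and predecessors, and it
separates the classes: an element of `τ ℤ_τ⁺ ∩ (1 + τ² ℤ_τ⁺)` or of
`(τ + τ² ℤ_τ⁺) ∩ (τ² + τ³ ℤ_τ⁺)` would produce a τ-integer lying only `1/τ` resp. `1/τ²` above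
an element of `τ ℤ_τ⁺`. Hence `ℤ_τ⁺` is generated from `0` by the two injective maps
`y ↦ τ y` and `y ↦ 1 + τ² y` with disjoint images, which read off the Zeckendorf digits one at a
time.
-/

open Set

noncomputable section

namespace TauInt

/-- The golden ratio `τ = (1+√5)/2`. -/
def τ : ℝ := (1 + Real.sqrt 5) / 2

/-- The set `ℤ_τ⁺` of `τ`-integers: real numbers of the form
`Σ_{k=0}^n ε_k·τ^k` with each `ε_k ∈ {0,1}`. -/
def Ztau : Set ℝ :=
  {x | ∃ (n : ℕ) (ε : ℕ → ℕ), (∀ k ≤ n, ε k = 0 ∨ ε k = 1) ∧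
    x = ∑ k ∈ Finset.range (n + 1), (ε k : ℝ) * τ ^ k}

/-- The successor of `a` in `ℤ_τ⁺`. -/
def succZ (a : ℝ) : ℝ := sInf {b ∈ Ztau | a < b}

/-- The predecessor of `a` in `ℤ_τ⁺`. -/
def predZ (a : ℝ) : ℝ := sSup {b ∈ Ztau | b < a}

theorem tau_eq_goldenRatio : τ = Real.goldenRatio := rfl

theorem one_lt_tau : 1 < τ := Real.one_lt_goldenRatio

theorem tau_pos : 0 < τ := Real.goldenRatio_pos

theorem tau_lt_two : τ < 2 := Real.goldenRatio_lt_two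

theorem tau_sq : τ ^ 2 = τ + 1 := Real.goldenRatio_sq

theorem inv_tau : τ⁻¹ = τ - 1 := by
  rw [tau_eq_goldenRatio, Real.inv_goldenRatio, ← Real.one_sub_goldenConj]
  ring

theorem lt_pow_of_tau_mul_le {z b : ℝ} {n : ℕ} (h : τ * z ≤ b) (hb : b < τ ^ (n + 1)) :
    z < τ ^ n :=
  lt_of_mul_lt_mul_left (h.trans_lt (hb.trans_eq (pow_succ' τ n))) tau_pos.le

theorem sum_digits_range_succ (n : ℕ) (ε : ℕ → ℕ) :
    ∑ k ∈ Finset.range (n + 2), (ε k : ℝ) * τ ^ k =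
      ε 0 + τ * ∑ k ∈ Finset.range (n + 1), (ε (k + 1) : ℝ) * τ ^ k := by
  rw [Finset.sum_range_succ', Finset.mul_sum, add_comm]
  simp only [pow_succ, pow_zero, mul_one]
  congr 1
  exact Finset.sum_congr rfl fun k _ => by ring

theorem zero_mem_Ztau : (0 : ℝ) ∈ Ztau := ⟨0, fun _ => 0, by simp, by simp⟩

theorem natCast_add_tau_mul_mem {c : ℕ} (hc : c = 0 ∨ c = 1) {y : ℝ} (hy : y ∈ Ztau) :
    (c : ℝ) + τ * y ∈ Ztau := by
  obtain ⟨n, ε, hε, rfl⟩ := hy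
  refine ⟨n + 1, fun k => if k = 0 then c else ε (k - 1), ?_, ?_⟩
  · rintro (_ | k) hk
    · simpa using hc
    · simpa using hε k (by omega)
  · rw [sum_digits_range_succ]
    simp

theorem tau_mul_mem {y : ℝ} (hy : y ∈ Ztau) : τ * y ∈ Ztau := by
  simpa using natCast_add_tau_mul_mem (.inl rfl) hy

theorem one_add_tau_mul_mem {y : ℝ} (hy : y ∈ Ztau) : 1 + τ * y ∈ Ztau := by
  simpa using natCast_add_tau_mul_mem (.inr rfl) hy

theorem Ztau_induction {P : ℝ → Prop} (zero : P 0) (tau_mul : ∀ y ∈ Ztau, P y → P (τ * y))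
    (one_add_tau_mul : ∀ y ∈ Ztau, P y → P (1 + τ * y)) {x : ℝ} (hx : x ∈ Ztau) : P x := by
  obtain ⟨n, ε, hε, rfl⟩ := hx
  induction n generalizing ε with
  | zero =>
    rcases hε 0 le_rfl with h | h
    · simpa [h] using zero
    · simpa [h] using one_add_tau_mul 0 zero_mem_Ztau zero
  | succ n ih =>
    have htail : ∀ k ≤ n, ε (k + 1) = 0 ∨ ε (k + 1) = 1 := fun k hk => hε _ (by omega)
    rw [sum_digits_range_succ]
    rcases hε 0 (Nat.zero_le _) with h | h
    · simpa [h] using tau_mul _ ⟨n, _, htail, rfl⟩ (ih _ htail)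
    · simpa [h] using one_add_tau_mul _ ⟨n, _, htail, rfl⟩ (ih _ htail)

theorem eq_zero_or_one_le {x : ℝ} (hx : x ∈ Ztau) : x = 0 ∨ 1 ≤ x := by
  refine Ztau_induction (P := fun x => x = 0 ∨ 1 ≤ x) (.inl rfl) ?_ ?_ hx
  · rintro y - (rfl | hy)
    · exact .inl (mul_zero τ)
    · exact .inr (one_le_mul_of_one_le_of_one_le one_lt_tau.le hy)
  · rintro y - hy
    have : 0 ≤ y := by rcases hy with rfl | hy <;> linarith
    exact .inr (le_add_of_nonneg_right (mul_nonneg tau_pos.le this))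

theorem nonneg_of_mem_Ztau {x : ℝ} (hx : x ∈ Ztau) : 0 ≤ x := by
  rcases eq_zero_or_one_le hx with rfl | h <;> linarith

theorem one_add_tau_sq_mul_mem {y : ℝ} (hy : y ∈ Ztau) : 1 + τ ^ 2 * y ∈ Ztau := by
  simpa [pow_two, mul_assoc] using one_add_tau_mul_mem (tau_mul_mem hy)

theorem tau_add_tau_sq_mul_mem {y : ℝ} (hy : y ∈ Ztau) : τ + τ ^ 2 * y ∈ Ztau := by
  simpa [pow_two, mul_add, mul_assoc] using tau_mul_mem (one_add_tau_mul_mem hy)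

theorem Ztau_eq_union :
    Ztau = (fun y => τ * y) '' Ztau ∪ (fun y => 1 + τ ^ 2 * y) '' Ztau := by
  refine Set.Subset.antisymm (fun x hx => ?_) (Set.union_subset ?_ ?_)
  · refine Ztau_induction (.inl ⟨0, zero_mem_Ztau, mul_zero τ⟩) (fun y hy _ => .inl ⟨y, hy, rfl⟩)
      ?_ hx
    rintro y - (⟨z, hz, rfl⟩ | ⟨z, hz, rfl⟩)
    · exact .inr ⟨z, hz, by ring⟩
    · exact .inl ⟨τ + τ ^ 2 * z, tau_add_tau_sq_mul_mem hz, by linear_combination tau_sq⟩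
  · rintro _ ⟨y, hy, rfl⟩
    exact tau_mul_mem hy
  · rintro _ ⟨y, hy, rfl⟩
    exact one_add_tau_sq_mul_mem hy

theorem tau_mul_mem_image_tau_add_or_image_tau_sq_add {y : ℝ} (hy : y ∈ Ztau) (hy0 : y ≠ 0) :
    τ * y ∈ (fun z => τ + τ ^ 2 * z) '' Ztau ∨ τ * y ∈ (fun z => τ ^ 2 + τ ^ 3 * z) '' Ztau := by
  refine (Ztau_induction (P := fun y => y = 0 ∨ τ * y ∈ (fun z => τ + τ ^ 2 * z) '' Ztau ∨
    τ * y ∈ (fun z => τ ^ 2 + τ ^ 3 * z) '' Ztau) (.inl rfl) ?_ ?_ hy).resolve_left hy0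
  · rintro y - (rfl | ⟨z, hz, hzy⟩ | ⟨z, hz, hzy⟩)
    · exact .inl (mul_zero τ)
    · exact .inr (.inr ⟨z, hz, by linear_combination τ * hzy⟩)
    · exact .inr (.inl ⟨1 + τ ^ 2 * z, one_add_tau_sq_mul_mem hz,
        by linear_combination τ * hzy - τ * tau_sq⟩)
  · exact fun y hy _ => .inr (.inl ⟨y, hy, by ring⟩)

theorem gap_of_lt_pow (n : ℕ) : ∀ x ∈ Ztau, ∀ b ∈ Ztau, x < b → b < τ ^ n →
    x + τ⁻¹ ≤ b ∧ (x ∈ (fun y => τ * y) '' Ztau → x + 1 ≤ b) := by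
  rw [inv_tau]
  induction n with
  | zero =>
    intro x hx b hb hxb hb1
    rcases eq_zero_or_one_le hb with rfl | h
    · exact absurd hxb (nonneg_of_mem_Ztau hx).not_gt
    · rw [pow_zero] at hb1
      linarith
  | succ n ih =>
    intro x hx b hb hxb hbn
    have hτ := one_lt_tau
    have above_tau_mul : ∀ y ∈ Ztau, τ * y < b → τ * y + 1 ≤ b := by
      intro y hy hyb
      have hy_lt := lt_pow_of_tau_mul_le hyb.le hbn
      rcases Ztau_eq_union.subset hb with ⟨z, hz, rfl⟩ | ⟨z, hz, rfl⟩
      · have hyz : y < z := lt_of_mul_lt_mul_left hyb tau_pos.le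
        have := (ih y hy z hz hyz (lt_pow_of_tau_mul_le le_rfl hbn)).1
        nlinarith [tau_sq]
      · -- otherwise `τ z < y`, and the gap of `1` above `τ z` would force `τ < 1`
        by_contra! h
        have hzy : τ * z < y := by nlinarith [tau_sq]
        have := (ih (τ * z) (tau_mul_mem hz) y hy hzy hy_lt).2 ⟨z, hz, rfl⟩
        nlinarith [tau_sq]
    refine ⟨?_, by rintro ⟨y, hy, rfl⟩; exact above_tau_mul y hy hxb⟩
    rcases Ztau_eq_union.subset hx with ⟨y, hy, rfl⟩ | ⟨y, hy, rfl⟩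
    · linarith [above_tau_mul y hy hxb, tau_lt_two]
    have hy0 := nonneg_of_mem_Ztau hy
    rcases Ztau_eq_union.subset hb with ⟨z, hz, rfl⟩ | ⟨z, hz, rfl⟩
    · have hyz : τ * y < z := by nlinarith [tau_sq]
      have := (ih (τ * y) (tau_mul_mem hy) z hz hyz (lt_pow_of_tau_mul_le le_rfl hbn)).2
        ⟨y, hy, rfl⟩
      nlinarith [tau_sq]
    · have hz0 := nonneg_of_mem_Ztau hz
      have hyz : y < z := by nlinarith [tau_sq]
      have := (ih y hy z hz hyz (lt_pow_of_tau_mul_le (by nlinarith [tau_sq]) hbn)).1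
      nlinarith [tau_sq]

theorem add_inv_tau_le_of_lt {x b : ℝ} (hx : x ∈ Ztau) (hb : b ∈ Ztau) (hxb : x < b) :
    x + τ⁻¹ ≤ b :=
  have ⟨n, hn⟩ := pow_unbounded_of_one_lt b one_lt_tau
  (gap_of_lt_pow n x hx b hb hxb hn).1

theorem add_one_le_of_lt {x b : ℝ} (hx : x ∈ (fun y => τ * y) '' Ztau) (hb : b ∈ Ztau)
    (hxb : x < b) : x + 1 ≤ b :=
  have ⟨n, hn⟩ := pow_unbounded_of_one_lt b one_lt_tau
  have ⟨_, hy, hyx⟩ := hx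
  (gap_of_lt_pow n x (hyx ▸ tau_mul_mem hy) b hb hxb hn).2 hx

theorem disjoint_image_tau_mul_image_one_add :
    Disjoint ((fun y => τ * y) '' Ztau) ((fun y => 1 + τ ^ 2 * y) '' Ztau) := by
  rw [Set.disjoint_left]
  rintro _ ⟨z, hz, rfl⟩ ⟨y, hy, h⟩
  have hzy : z = τ * y + (τ - 1) := mul_left_cancel₀ tau_pos.ne' (by linear_combination -h - tau_sq)
  have := add_one_le_of_lt ⟨y, hy, rfl⟩ hz (by linarith [one_lt_tau])
  linarith [tau_lt_two]

theorem disjoint_image_tau_add_image_tau_sq_add :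
    Disjoint ((fun y => τ + τ ^ 2 * y) '' Ztau) ((fun y => τ ^ 2 + τ ^ 3 * y) '' Ztau) := by
  rw [Set.disjoint_left]
  rintro _ ⟨y, hy, rfl⟩ ⟨z, hz, h⟩
  have hzy : y = τ * z + (2 - τ) :=
    mul_left_cancel₀ (pow_ne_zero 2 tau_pos.ne') (by linear_combination -h + τ * tau_sq)
  have := add_one_le_of_lt ⟨z, hz, rfl⟩ hy (by linarith [tau_lt_two])
  linarith [one_lt_tau]

theorem Ztau_diff_zero :
    Ztau \ {0} = ((fun y => τ * y) '' Ztau \ {0}) ∪ (fun y => 1 + τ ^ 2 * y) '' Ztau := by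
  have h0 : (0 : ℝ) ∉ (fun y => 1 + τ ^ 2 * y) '' Ztau := by
    rintro ⟨y, hy, h⟩
    nlinarith [nonneg_of_mem_Ztau hy, sq_nonneg τ]
  rw [← Set.sdiff_singleton_eq_self h0, ← Set.union_sdiff_distrib, ← Ztau_eq_union]

theorem image_tau_mul_diff_zero :
    (fun y => τ * y) '' Ztau \ {0} =
      (fun y => τ + τ ^ 2 * y) '' Ztau ∪ (fun y => τ ^ 2 + τ ^ 3 * y) '' Ztau := by
  ext x
  constructor
  · rintro ⟨⟨y, hy, rfl⟩, hx0⟩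
    exact tau_mul_mem_image_tau_add_or_image_tau_sq_add hy (by rintro rfl; simp at hx0)
  · have hτ := tau_pos
    rintro (⟨y, hy, rfl⟩ | ⟨y, hy, rfl⟩) <;> have hy0 := nonneg_of_mem_Ztau hy
    · exact ⟨⟨1 + τ * y, one_add_tau_mul_mem hy, by ring⟩,
        (add_pos_of_pos_of_nonneg (by positivity) (by positivity)).ne'⟩
    · exact ⟨⟨τ + τ ^ 2 * y, tau_add_tau_sq_mul_mem hy, by ring⟩,
        (add_pos_of_pos_of_nonneg (by positivity) (by positivity)).ne'⟩

theorem succZ_eq {a c : ℝ} (hc : c ∈ Ztau) (hac : a < c) (h : ∀ b ∈ Ztau, a < b → c ≤ b) :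
    succZ a = c :=
  IsLeast.csInf_eq ⟨⟨hc, hac⟩, fun b hb => h b hb.1 hb.2⟩

theorem predZ_eq {a c : ℝ} (hc : c ∈ Ztau) (hca : c < a) (h : ∀ b ∈ Ztau, c < b → a ≤ b) :
    predZ a = c :=
  IsGreatest.csSup_eq ⟨⟨hc, hca⟩, fun b hb => not_lt.1 fun hcb => (h b hb.1 hcb).not_gt hb.2⟩

theorem gaps_of_mem_image_one_add {a : ℝ} (ha : a ∈ (fun y => 1 + τ ^ 2 * y) '' Ztau) :
    a - predZ a = 1 ∧ succZ a - a = 1 / τ := by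
  obtain ⟨y, hy, rfl⟩ := ha
  have hpred : predZ (1 + τ ^ 2 * y) = τ ^ 2 * y := by
    have hτy : τ ^ 2 * y ∈ (fun y => τ * y) '' Ztau := ⟨τ * y, tau_mul_mem hy, by ring⟩
    refine predZ_eq (Ztau_eq_union.superset (.inl hτy)) (by linarith) fun b hb hlt => ?_
    linarith [add_one_le_of_lt hτy hb hlt]
  have hsucc : succZ (1 + τ ^ 2 * y) = τ + τ ^ 2 * y := by
    refine succZ_eq (tau_add_tau_sq_mul_mem hy) (by linarith [one_lt_tau]) fun b hb hlt => ?_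
    linarith [add_inv_tau_le_of_lt (one_add_tau_sq_mul_mem hy) hb hlt, inv_tau]
  rw [hpred, hsucc, one_div, inv_tau]
  constructor <;> ring

theorem gaps_of_mem_image_tau_add {a : ℝ} (ha : a ∈ (fun y => τ + τ ^ 2 * y) '' Ztau) :
    a - predZ a = 1 / τ ∧ succZ a - a = 1 := by
  obtain ⟨y, hy, rfl⟩ := ha
  have hpred : predZ (τ + τ ^ 2 * y) = 1 + τ ^ 2 * y := by
    refine predZ_eq (one_add_tau_sq_mul_mem hy) (by linarith [one_lt_tau]) fun b hb hlt => ?_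
    linarith [add_inv_tau_le_of_lt (one_add_tau_sq_mul_mem hy) hb hlt, inv_tau]
  have hsucc : succZ (τ + τ ^ 2 * y) = τ + τ ^ 2 * y + 1 := by
    have hmem : τ + τ ^ 2 * y + 1 ∈ Ztau := by
      convert one_add_tau_mul_mem (one_add_tau_mul_mem hy) using 1
      ring
    exact succZ_eq hmem (by linarith) fun b hb hlt =>
      add_one_le_of_lt ⟨1 + τ * y, one_add_tau_mul_mem hy, by ring⟩ hb hlt
  rw [hpred, hsucc, one_div, inv_tau]
  constructor <;> ring

theorem gaps_of_mem_image_tau_sq_add {a : ℝ} (ha : a ∈ (fun y => τ ^ 2 + τ ^ 3 * y) '' Ztau) :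
    a - predZ a = 1 ∧ succZ a - a = 1 := by
  obtain ⟨y, hy, rfl⟩ := ha
  have hpred : predZ (τ ^ 2 + τ ^ 3 * y) = τ + τ ^ 3 * y := by
    have hτy : τ + τ ^ 3 * y ∈ (fun y => τ * y) '' Ztau :=
      ⟨1 + τ ^ 2 * y, one_add_tau_sq_mul_mem hy, by ring⟩
    refine predZ_eq (Ztau_eq_union.superset (.inl hτy)) (by nlinarith [tau_sq, one_lt_tau])
      fun b hb hlt => ?_
    linarith [add_one_le_of_lt hτy hb hlt, tau_sq]
  have hsucc : succZ (τ ^ 2 + τ ^ 3 * y) = τ ^ 2 + τ ^ 3 * y + 1 := by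
    have hmem : τ ^ 2 + τ ^ 3 * y + 1 ∈ Ztau := by
      convert one_add_tau_sq_mul_mem (one_add_tau_mul_mem hy) using 1
      ring
    exact succZ_eq hmem (by linarith) fun b hb hlt =>
      add_one_le_of_lt ⟨τ + τ ^ 2 * y, tau_add_tau_sq_mul_mem hy, by ring⟩ hb hlt
  rw [hpred, hsucc]
  exact ⟨by linear_combination tau_sq, by ring⟩

theorem Ztau_induction_zeck {P : ℝ → Prop} (zero : P 0)
    (tau_mul : ∀ y ∈ Ztau, P y → P (τ * y))
    (one_add_tau_sq_mul : ∀ y ∈ Ztau, P y → P (1 + τ ^ 2 * y)) {x : ℝ} (hx : x ∈ Ztau) : P x := by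
  obtain ⟨n, hn⟩ := pow_unbounded_of_one_lt x one_lt_tau
  induction n generalizing x with
  | zero =>
    rcases eq_zero_or_one_le hx with rfl | h
    · exact zero
    · rw [pow_zero] at hn
      linarith
  | succ n ih =>
    rcases Ztau_eq_union.subset hx with ⟨y, hy, rfl⟩ | ⟨y, hy, rfl⟩
    · exact tau_mul y hy (ih hy (lt_pow_of_tau_mul_le le_rfl hn))
    · have hy0 := nonneg_of_mem_Ztau hy
      exact one_add_tau_sq_mul y hy (ih hy (lt_pow_of_tau_mul_le (by nlinarith [tau_sq]) hn))

def tauSum (s : Finset ℕ) : ℝ := ∑ k ∈ s, τ ^ k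

def IsZeck (s : Finset ℕ) : Prop := ∀ k ∈ s, k + 1 ∉ s

theorem tauSum_mem (s : Finset ℕ) : tauSum s ∈ Ztau := by
  refine ⟨s.sup id, fun k => if k ∈ s then 1 else 0,
    fun k _ => by by_cases hk : k ∈ s <;> simp [hk], ?_⟩
  have hsub : s ⊆ Finset.range (s.sup id + 1) := fun k hk =>
    Finset.mem_range_succ_iff.2 (Finset.le_sup (f := id) hk)
  simp [tauSum, Finset.sum_ite_mem, Finset.inter_eq_right.2 hsub]

theorem tauSum_map_addRight (s : Finset ℕ) (d : ℕ) :
    tauSum (s.map (addRightEmbedding d)) = τ ^ d * tauSum s := by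
  rw [tauSum, Finset.sum_map, tauSum, Finset.mul_sum]
  exact Finset.sum_congr rfl fun k _ => by simp [pow_add, mul_comm]

theorem tauSum_insert_zero_map_two (s : Finset ℕ) :
    tauSum (insert 0 (s.map (addRightEmbedding 2))) = 1 + τ ^ 2 * tauSum s := by
  rw [tauSum, Finset.sum_insert (by simp), ← tauSum, tauSum_map_addRight, pow_zero]

theorem eq_empty_of_tauSum_eq_zero {s : Finset ℕ} (h : tauSum s = 0) : s = ∅ :=
  Finset.not_nonempty_iff_eq_empty.1 fun hs =>
    (Finset.sum_pos (fun k _ => pow_pos tau_pos k) hs).ne' h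

theorem isZeck_map_addRight {s : Finset ℕ} {d : ℕ} :
    IsZeck (s.map (addRightEmbedding d)) ↔ IsZeck s := by
  simp [IsZeck, add_right_comm _ d]

theorem IsZeck.insert_zero_map_two {s : Finset ℕ} (hs : IsZeck s) :
    IsZeck (insert 0 (s.map (addRightEmbedding 2))) := by
  simpa [IsZeck] using hs

theorem exists_eq_map_addRight {s : Finset ℕ} {d : ℕ} (h : ∀ k ∈ s, d ≤ k) :
    ∃ t : Finset ℕ, s = t.map (addRightEmbedding d) := by
  refine ⟨s.image (· - d), Finset.ext fun k => ?_⟩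
  simp only [Finset.mem_map, Finset.mem_image, addRightEmbedding_apply]
  constructor
  · exact fun hk => ⟨k - d, ⟨k, hk, rfl⟩, Nat.sub_add_cancel (h k hk)⟩
  · rintro ⟨_, ⟨j, hj, rfl⟩, rfl⟩
    rwa [Nat.sub_add_cancel (h j hj)]

theorem IsZeck.eq_map_one_or_eq_insert_zero {s : Finset ℕ} (hs : IsZeck s) :
    (∃ t, IsZeck t ∧ s = t.map (addRightEmbedding 1)) ∨
      ∃ t, IsZeck t ∧ s = insert 0 (t.map (addRightEmbedding 2)) := by
  by_cases h0 : 0 ∈ s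
  · have h1 : 1 ∉ s := hs 0 h0
    obtain ⟨t, ht⟩ := exists_eq_map_addRight (s := s.erase 0) (d := 2) fun k hk => by
      have := Finset.ne_of_mem_erase hk
      have : k ≠ 1 := by rintro rfl; exact h1 (Finset.mem_of_mem_erase hk)
      omega
    have hZeck : IsZeck (s.erase 0) := fun k hk hk1 =>
      hs k (Finset.mem_of_mem_erase hk) (Finset.mem_of_mem_erase hk1)
    exact .inr ⟨t, isZeck_map_addRight.1 (ht ▸ hZeck), by rw [← ht, Finset.insert_erase h0]⟩
  · obtain ⟨t, ht⟩ := exists_eq_map_addRight (s := s) (d := 1) fun k hk =>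
      Nat.one_le_iff_ne_zero.2 fun hk0 => h0 (hk0 ▸ hk)
    exact .inl ⟨t, isZeck_map_addRight.1 (ht ▸ hs), ht⟩

theorem IsZeck.exists_eq_map_one {s : Finset ℕ} (hs : IsZeck s) {y : ℝ} (hy : y ∈ Ztau)
    (h : tauSum s = τ * y) : ∃ t, IsZeck t ∧ tauSum t = y ∧ s = t.map (addRightEmbedding 1) := by
  rcases hs.eq_map_one_or_eq_insert_zero with ⟨t, ht, rfl⟩ | ⟨t, -, rfl⟩
  · rw [tauSum_map_addRight, pow_one] at h
    exact ⟨t, ht, mul_left_cancel₀ tau_pos.ne' h, rfl⟩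
  · rw [tauSum_insert_zero_map_two] at h
    exact (Set.disjoint_left.1 disjoint_image_tau_mul_image_one_add ⟨y, hy, rfl⟩
      ⟨tauSum t, tauSum_mem t, h⟩).elim

theorem IsZeck.exists_eq_insert_zero {s : Finset ℕ} (hs : IsZeck s) {y : ℝ} (hy : y ∈ Ztau)
    (h : tauSum s = 1 + τ ^ 2 * y) :
    ∃ t, IsZeck t ∧ tauSum t = y ∧ s = insert 0 (t.map (addRightEmbedding 2)) := by
  rcases hs.eq_map_one_or_eq_insert_zero with ⟨t, -, rfl⟩ | ⟨t, ht, rfl⟩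
  · rw [tauSum_map_addRight, pow_one] at h
    exact (Set.disjoint_left.1 disjoint_image_tau_mul_image_one_add ⟨tauSum t, tauSum_mem t, h⟩
      ⟨y, hy, rfl⟩).elim
  · rw [tauSum_insert_zero_map_two] at h
    exact ⟨t, ht, mul_left_cancel₀ (pow_ne_zero 2 tau_pos.ne') (add_left_cancel h), rfl⟩

theorem existsUnique_isZeck {x : ℝ} (hx : x ∈ Ztau) :
    ∃! s : Finset ℕ, IsZeck s ∧ x = tauSum s := by
  refine Ztau_induction_zeck (P := fun x => ∃! s : Finset ℕ, IsZeck s ∧ x = tauSum s) ?_ ?_ ?_ hx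
  · exact ⟨∅, ⟨by simp [IsZeck], by simp [tauSum]⟩,
      fun s ⟨_, hs⟩ => eq_empty_of_tauSum_eq_zero hs.symm⟩
  · rintro _ hy ⟨t, ⟨ht, rfl⟩, huniq⟩
    refine ⟨t.map (addRightEmbedding 1),
      ⟨isZeck_map_addRight.2 ht, by rw [tauSum_map_addRight, pow_one]⟩, ?_⟩
    rintro s ⟨hs, hst⟩
    obtain ⟨s', hs', hs't, rfl⟩ := hs.exists_eq_map_one hy hst.symm
    rw [huniq s' ⟨hs', hs't.symm⟩]
  · rintro _ hy ⟨t, ⟨ht, rfl⟩, huniq⟩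
    refine ⟨insert 0 (t.map (addRightEmbedding 2)),
      ⟨ht.insert_zero_map_two, (tauSum_insert_zero_map_two t).symm⟩, ?_⟩
    rintro s ⟨hs, hst⟩
    obtain ⟨s', hs', hs't, rfl⟩ := hs.exists_eq_insert_zero hy hst.symm
    rw [huniq s' ⟨hs', hs't.symm⟩]

end TauInt

open TauInt in
theorem tau_integers_structure :
    (∀ x ∈ Ztau, x ≠ 0 →
      ∃! s : Finset ℕ, (∀ k ∈ s, k + 1 ∉ s) ∧ x = ∑ k ∈ s, τ ^ k) ∧
    (Ztau \ {0} = ((fun y => τ * y) '' Ztau \ {0}) ∪ (fun y => 1 + τ ^ 2 * y) '' Ztau ∧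
      Disjoint ((fun y => τ * y) '' Ztau \ {0}) ((fun y => 1 + τ ^ 2 * y) '' Ztau) ∧
      (fun y => τ * y) '' Ztau \ {0} =
        (fun y => τ + τ ^ 2 * y) '' Ztau ∪ (fun y => τ ^ 2 + τ ^ 3 * y) '' Ztau ∧
      Disjoint ((fun y => τ + τ ^ 2 * y) '' Ztau) ((fun y => τ ^ 2 + τ ^ 3 * y) '' Ztau)) ∧
    ∀ a ∈ Ztau, a ≠ 0 →
      (a ∈ (fun y => 1 + τ ^ 2 * y) '' Ztau →
        a - predZ a = 1 ∧ succZ a - a = 1 / τ) ∧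
      (a ∈ (fun y => τ + τ ^ 2 * y) '' Ztau →
        a - predZ a = 1 / τ ∧ succZ a - a = 1) ∧
      (a ∈ (fun y => τ ^ 2 + τ ^ 3 * y) '' Ztau →
        a - predZ a = 1 ∧ succZ a - a = 1) :=
  ⟨fun _ hx _ => existsUnique_isZeck hx,
    ⟨Ztau_diff_zero, disjoint_image_tau_mul_image_one_add.mono_left Set.sdiff_subset,
      image_tau_mul_diff_zero, disjoint_image_tau_add_image_tau_sq_add⟩,
    fun _ _ _ => ⟨gaps_of_mem_image_one_add, gaps_of_mem_image_tau_add,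
      gaps_of_mem_image_tau_sq_add⟩⟩
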